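/- arXiv:1703.01672 — 2 statements merged into one kernel-verified Lean document; each statement's English description precedes it below -/
import Mathlib

section
/- In the noiseless case, for every sorted probability distribution p_1 ≥ ⋯ ≥ p_N ≥ 0 and every k ≥ 0, the optimal guessing time after asking k truthfully-answered yes/no questions (equivalently, after learning which of 2^k disjoint parts contains X) satisfies 2^{−k}·(G(X) − 1/2) + 1/2 ≤ G_opt^{(k)}(X) ≤ 2^{−k}·(G(X) − 1) + 1. -/
open Finset

noncomputable def guess (N : ℕ) (q : Fin N → ℝ) : ℝ :=
  Finset.univ.inf' ⟨1, Finset.mem_univ 1⟩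
    (fun σ : Equiv.Perm (Fin N) => ∑ k : Fin N, ((k : ℝ) + 1) * q (σ k))

noncomputable def guessA (N : ℕ) (q : Fin N → ℝ) (p : ℝ) (A : Finset (Fin N)) : ℝ :=
  ∑ y : Bool, Finset.univ.inf' ⟨1, Finset.mem_univ 1⟩
    (fun σ : Equiv.Perm (Fin N) => ∑ k : Fin N,
      ((k : ℝ) + 1) * q (σ k) * (if ((σ k ∈ A) ↔ (y = true)) then 1 - p else p))

noncomputable def guessOpt (N : ℕ) (q : Fin N → ℝ) (p : ℝ) : ℝ :=
  Finset.univ.inf' ⟨∅, Finset.mem_univ ∅⟩ (fun A : Finset (Fin N) => guessA N q p A)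

def zigzag (N : ℕ) : Finset (Fin N) := Finset.univ.filter (fun k => (k : ℕ) % 2 = 0)

noncomputable def wt (N : ℕ) (q : Fin N → ℝ) (p : ℝ) (i j : Fin N) : ℝ :=
  max 0 ((1 - p) * min (q i) (q j) - p * max (q i) (q j))

noncomputable def cut (N : ℕ) (q : Fin N → ℝ) (p : ℝ) (A : Finset (Fin N)) : ℝ :=
  ∑ i ∈ A, ∑ j ∈ Aᶜ, wt N q p i j

noncomputable def maxcut (N : ℕ) (q : Fin N → ℝ) (p : ℝ) : ℝ :=
  Finset.univ.sup' ⟨∅, Finset.mem_univ ∅⟩ (fun A : Finset (Fin N) => cut N q p A)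

noncomputable def guessOptK (N k : ℕ) (q : Fin N → ℝ) : ℝ :=
  Finset.univ.inf' ⟨fun _ => ⟨0, by positivity⟩, Finset.mem_univ _⟩
    (fun f : Fin N → Fin (2 ^ k) =>
      ∑ m : Fin (2 ^ k), Finset.univ.inf' ⟨1, Finset.mem_univ 1⟩
        (fun σ : Equiv.Perm (Fin N) =>
          ∑ j : Fin N, ((j : ℝ) + 1) * q (σ j) * (if f (σ j) = m then 1 else 0)))

/-!
Order the candidates by decreasing probability, indexed from `0`. Once the part containing `X` is
known, the guesser runs through that part, so a strategy gives every candidate `i` a pair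
(part, rank within the part) and costs `∑ (rank i + 1) p_i`; at most `M = 2 ^ k` candidates share
a rank. Sorting by rank and rearranging therefore shows that the striped partition `i ↦ i mod M`,
in which candidate `i` has rank `⌊i / M⌋`, is optimal. Its cost `∑ (⌊i / M⌋ + 1) p_i` is at most
`(G - 1) / M + 1` because `⌊i / M⌋ ≤ i / M`. It is at least `(G - 1/2) / M + 1/2` by Abel
summation: the difference is `∑ p_i c_i`, where `c_i = (M - 1 - 2 (i mod M)) / 2M` has nonnegative
partial sums and `p` is decreasing.
-/

theorem sum_range_mul_nonneg_of_antitone {Q c : ℕ → ℝ} (n : ℕ) (hQ : Antitone Q)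
    (hQ0 : ∀ i, 0 ≤ Q i) (hc : ∀ m ≤ n, 0 ≤ ∑ i ∈ range m, c i) :
    0 ≤ ∑ i ∈ range n, Q i * c i := by
  have hparts := sum_range_by_parts Q c n
  simp only [smul_eq_mul] at hparts
  rw [hparts]
  have hlast := mul_nonneg (hQ0 (n - 1)) (hc n le_rfl)
  have hsteps : ∑ i ∈ range (n - 1), (Q (i + 1) - Q i) * ∑ j ∈ range (i + 1), c j ≤ 0 :=
    sum_nonpos fun i hi => mul_nonpos_of_nonpos_of_nonneg (sub_nonpos.2 (hQ i.le_succ))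
      (hc _ (by rw [mem_range] at hi; omega))
  linarith

theorem sum_range_sub_two_mul_mod (M n : ℕ) (hM : 0 < M) :
    ∑ i ∈ range n, ((M : ℝ) - 1 - 2 * ((i % M : ℕ) : ℝ)) =
      ((n % M : ℕ) : ℝ) * (M - (n % M : ℕ)) := by
  induction n with
  | zero => simp
  | succ n ih =>
    rw [sum_range_succ, ih, ← Nat.mod_add_mod n M 1]
    obtain h | h : n % M + 1 < M ∨ n % M + 1 = M := Nat.lt_or_eq_of_le (Nat.mod_lt n hM)
    · rw [Nat.mod_eq_of_lt h]
      push_cast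
      ring
    · have hR : ((n % M : ℕ) : ℝ) + 1 = M := by exact_mod_cast h
      rw [h, Nat.mod_self]
      push_cast
      linear_combination (-((n % M : ℕ) : ℝ) - 1) * hR

section

variable {N : ℕ}

theorem sum_succ_mul_comp_perm (σ : Equiv.Perm (Fin N)) (g : Fin N → ℝ) :
    ∑ j : Fin N, ((j : ℝ) + 1) * g (σ j) = ∑ i, (((σ.symm i : ℕ) : ℝ) + 1) * g i := by
  conv_rhs => rw [← Equiv.sum_comp σ]
  simp

theorem guess_eq_sum_of_antitone {q : Fin N → ℝ} (hq : Antitone q) :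
    guess N q = ∑ i : Fin N, ((i : ℝ) + 1) * q i := by
  have hanti : Antivary (fun i : Fin N => (i : ℝ) + 1) q :=
    Monotone.antivary (fun i j hij => by simpa using hij) hq
  unfold guess
  exact le_antisymm ((inf'_le _ (mem_univ 1)).trans_eq (by simp))
    (le_inf' _ _ fun σ _ => hanti.sum_mul_le_sum_mul_comp_perm)

section partGuess

variable {K : ℕ} (q : Fin N → ℝ) (f : Fin N → Fin K) (m : Fin K)

noncomputable def partGuessCost (σ : Equiv.Perm (Fin N)) : ℝ :=
  ∑ j : Fin N, ((j : ℝ) + 1) * q (σ j) * (if f (σ j) = m then 1 else 0)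

noncomputable def partGuess : ℝ :=
  univ.inf' ⟨1, mem_univ 1⟩ (partGuessCost q f m)

theorem partGuessCost_eq (σ : Equiv.Perm (Fin N)) :
    partGuessCost q f m σ =
      ∑ i, (((σ.symm i : ℕ) : ℝ) + 1) * q i * (if f i = m then 1 else 0) := by
  simp_rw [partGuessCost, mul_assoc]
  exact sum_succ_mul_comp_perm σ fun i => q i * (if f i = m then 1 else 0)

theorem partGuess_le (σ : Equiv.Perm (Fin N)) :
    partGuess q f m ≤ ∑ i, (((σ.symm i : ℕ) : ℝ) + 1) * q i * (if f i = m then 1 else 0) :=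
  (inf'_le _ (mem_univ σ)).trans_eq (partGuessCost_eq q f m σ)

theorem exists_partGuess_eq : ∃ σ : Equiv.Perm (Fin N),
    partGuess q f m = ∑ i, (((σ.symm i : ℕ) : ℝ) + 1) * q i * (if f i = m then 1 else 0) := by
  obtain ⟨σ, -, hσ⟩ := exists_mem_eq_inf' ⟨1, mem_univ 1⟩ (partGuessCost q f m)
  exact ⟨σ, hσ.trans (partGuessCost_eq q f m σ)⟩

theorem partGuess_le_of_injOn (r : Fin N → Fin N) (hr : Set.InjOn r {i | f i = m}) :
    partGuess q f m ≤ ∑ i, (((r i : ℕ) : ℝ) + 1) * q i * (if f i = m then 1 else 0) := by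
  obtain ⟨τ, hτ⟩ := Equiv.Perm.exists_extending_pair (α := {i | f i = m}) Subtype.val
    (fun i => r i) Subtype.val_injective hr.injective
  refine (partGuess_le q f m τ.symm).trans_eq (sum_congr rfl fun i _ => ?_)
  by_cases hi : f i = m
  · simp [hτ ⟨i, hi⟩]
  · simp [hi]

end partGuess

theorem guessOptK_eq_inf'_partGuess (k : ℕ) (q : Fin N → ℝ) :
    guessOptK N k q = univ.inf' ⟨fun _ => ⟨0, by positivity⟩, mem_univ _⟩
      fun f : Fin N → Fin (2 ^ k) => ∑ m, partGuess q f m :=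
  rfl

noncomputable def stripedGuess (M : ℕ) (q : Fin N → ℝ) : ℝ :=
  ∑ i : Fin N, ((((i : ℕ) / M : ℕ) : ℝ) + 1) * q i

theorem stripedGuess_le_sum {M : ℕ} {q : Fin N → ℝ} (hq : Antitone q) (hnn : ∀ i, 0 ≤ q i)
    (f : Fin N → Fin M) (W : Fin N → ℕ) (hfW : Function.Injective fun i => (f i, W i)) :
    stripedGuess M q ≤ ∑ i, ((W i : ℝ) + 1) * q i := by
  set π := Tuple.sort W
  have hmono : Monotone (W ∘ π) := Tuple.monotone_sort W
  -- The `j + 1` candidates `π 0, …, π j` have distinct pairs `(f, W)` with `W ≤ W (π j)`.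
  have hrank : ∀ j : Fin N, (j : ℕ) / M ≤ W (π j) := by
    intro j
    have hcard : #(Iic j) ≤ #((univ : Finset (Fin M)) ×ˢ range (W (π j) + 1)) := by
      refine card_le_card_of_injOn (fun j' => (f (π j'), W (π j'))) (fun j' hj' => ?_)
        fun a _ b _ hab => π.injective (hfW hab)
      simpa [Nat.lt_succ_iff] using hmono (mem_Iic.1 hj')
    rw [Fin.card_Iic, card_product, card_univ, Fintype.card_fin, card_range] at hcard
    rw [← Nat.lt_succ_iff, Nat.div_lt_iff_lt_mul (f j).pos]
    linarith
  have hmono' : Monotone fun j => (W (π j) : ℝ) + 1 := fun a b hab => by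
    simpa using hmono hab
  calc stripedGuess M q ≤ ∑ j, ((W (π j) : ℝ) + 1) * q j :=
        sum_le_sum fun j _ => mul_le_mul_of_nonneg_right (by simpa using hrank j) (hnn j)
    _ ≤ ∑ j, ((W (π j) : ℝ) + 1) * q (π j) :=
        (hmono'.antivary hq).sum_mul_le_sum_mul_comp_perm
    _ = ∑ i, ((W i : ℝ) + 1) * q i := Equiv.sum_comp π fun i => ((W i : ℝ) + 1) * q i

theorem stripedGuess_le_guessOptK {k : ℕ} {q : Fin N → ℝ} (hq : Antitone q)
    (hnn : ∀ i, 0 ≤ q i) : stripedGuess (2 ^ k) q ≤ guessOptK N k q := by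
  rw [guessOptK_eq_inf'_partGuess]
  refine le_inf' _ _ fun f _ => ?_
  choose σ hσ using exists_partGuess_eq q f
  set W : Fin N → ℕ := fun i => (σ (f i)).symm i
  have hfW : Function.Injective fun i => (f i, W i) := by
    intro a b hab
    obtain ⟨hf, hW⟩ := Prod.mk.inj hab
    simp only [W, hf] at hW
    exact (σ (f b)).symm.injective (Fin.ext hW)
  calc stripedGuess (2 ^ k) q ≤ ∑ i, ((W i : ℝ) + 1) * q i :=
        stripedGuess_le_sum hq hnn f W hfW
    _ = ∑ m, partGuess q f m := by
      simp only [hσ, W]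
      rw [sum_comm]
      simp [mul_ite]

theorem guessOptK_le_stripedGuess (k : ℕ) (q : Fin N → ℝ) :
    guessOptK N k q ≤ stripedGuess (2 ^ k) q := by
  have hM : 0 < 2 ^ k := Nat.two_pow_pos k
  set f : Fin N → Fin (2 ^ k) := fun i => ⟨i % 2 ^ k, Nat.mod_lt _ hM⟩
  set r : Fin N → Fin N := fun i => ⟨i / 2 ^ k, (Nat.div_le_self _ _).trans_lt i.2⟩
  have hr : ∀ m, Set.InjOn r {i | f i = m} := by
    intro m a ha b hb hab
    have hmod : (a : ℕ) % 2 ^ k = b % 2 ^ k := congrArg Fin.val (ha.trans hb.symm)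
    have hdiv : (a : ℕ) / 2 ^ k = b / 2 ^ k := congrArg Fin.val hab
    exact Fin.ext (by rw [← Nat.div_add_mod a (2 ^ k), hmod, hdiv, Nat.div_add_mod])
  calc guessOptK N k q ≤ ∑ m, partGuess q f m := inf'_le _ (mem_univ f)
    _ ≤ ∑ m, ∑ i, (((r i : ℕ) : ℝ) + 1) * q i * (if f i = m then 1 else 0) :=
      sum_le_sum fun m _ => partGuess_le_of_injOn q f m r (hr m)
    _ = stripedGuess (2 ^ k) q := by
      rw [sum_comm]
      simp [stripedGuess, r, mul_ite]

theorem guessOptK_eq_stripedGuess (k : ℕ) {q : Fin N → ℝ} (hq : Antitone q)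
    (hnn : ∀ i, 0 ≤ q i) : guessOptK N k q = stripedGuess (2 ^ k) q :=
  (guessOptK_le_stripedGuess k q).antisymm (stripedGuess_le_guessOptK hq hnn)

theorem stripedGuess_le (M : ℕ) {q : Fin N → ℝ} (hnn : ∀ i, 0 ≤ q i) (hsum : ∑ i, q i = 1) :
    stripedGuess M q ≤ (M : ℝ)⁻¹ * (∑ i : Fin N, ((i : ℝ) + 1) * q i - 1) + 1 := by
  have hpt : ∀ i : Fin N, ((i : ℝ) / M + 1) * q i =
      (M : ℝ)⁻¹ * (((i : ℝ) + 1) * q i) - (M : ℝ)⁻¹ * q i + q i := fun i => by ring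
  calc stripedGuess M q ≤ ∑ i : Fin N, ((i : ℝ) / M + 1) * q i :=
        sum_le_sum fun i _ =>
          mul_le_mul_of_nonneg_right (by gcongr; exact Nat.cast_div_le) (hnn i)
    _ = (M : ℝ)⁻¹ * (∑ i : Fin N, ((i : ℝ) + 1) * q i - 1) + 1 := by
      simp_rw [hpt, sum_add_distrib, sum_sub_distrib, ← mul_sum, hsum]
      ring

theorem le_stripedGuess {M : ℕ} (hM : 0 < M) {q : Fin N → ℝ} (hq : Antitone q)
    (hnn : ∀ i, 0 ≤ q i) (hsum : ∑ i, q i = 1) :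
    (M : ℝ)⁻¹ * (∑ i : Fin N, ((i : ℝ) + 1) * q i - 1 / 2) + 1 / 2 ≤ stripedGuess M q := by
  set c : ℕ → ℝ := fun i => ((M : ℝ) - 1 - 2 * ((i % M : ℕ) : ℝ)) / (2 * M)
  set Q : ℕ → ℝ := fun i => if h : i < N then q ⟨i, h⟩ else 0
  have hQ : Antitone Q := by
    intro a b hab
    by_cases hb : b < N
    · simp only [Q, dif_pos hb, dif_pos (hab.trans_lt hb)]
      exact hq (Fin.mk_le_mk.2 hab)
    · simp only [Q, dif_neg hb]
      split_ifs <;> simp [hnn]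
  have hQ0 : ∀ i, 0 ≤ Q i := by
    intro i
    simp only [Q]
    split_ifs <;> simp [hnn]
  have hc : ∀ m, 0 ≤ ∑ i ∈ range m, c i := by
    intro m
    rw [← sum_div, sum_range_sub_two_mul_mod M m hM]
    have : ((m % M : ℕ) : ℝ) ≤ M := by exact_mod_cast (Nat.mod_lt m hM).le
    have : (0 : ℝ) ≤ ((m % M : ℕ) : ℝ) := by positivity
    positivity
  have key := sum_range_mul_nonneg_of_antitone N hQ hQ0 fun m _ => hc m
  have hpt : ∀ i : Fin N, Q i * c i = ((((i : ℕ) / M : ℕ) : ℝ) + 1) * q i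
      - (M : ℝ)⁻¹ * (((i : ℝ) + 1) * q i) - (1 / 2 - (M : ℝ)⁻¹ / 2) * q i := by
    intro i
    have hi : ((i : ℕ) : ℝ) = M * (((i : ℕ) / M : ℕ) : ℝ) + (((i : ℕ) % M : ℕ) : ℝ) := by
      exact_mod_cast (Nat.div_add_mod i M).symm
    simp only [Q, c, dif_pos i.2]
    rw [hi]
    field_simp
    ring
  rw [← Fin.sum_univ_eq_sum_range] at key
  simp_rw [hpt, sum_sub_distrib, ← mul_sum, hsum] at key
  unfold stripedGuess
  linarith

end

theorem stmt_7_general (N : ℕ) (q : Fin N → ℝ)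
    (hnn : ∀ i, 0 ≤ q i) (hsum : ∑ i, q i = 1)
    (hsort : ∀ i j : Fin N, i ≤ j → q j ≤ q i) (k : ℕ) :
    ((2 : ℝ) ^ k)⁻¹ * (guess N q - 1 / 2) + 1 / 2 ≤ guessOptK N k q ∧
    guessOptK N k q ≤ ((2 : ℝ) ^ k)⁻¹ * (guess N q - 1) + 1 := by
  have hq : Antitone q := hsort
  have hcast : (2 : ℝ) ^ k = ((2 ^ k : ℕ) : ℝ) := by push_cast; rfl
  rw [guess_eq_sum_of_antitone hq, guessOptK_eq_stripedGuess k hq hnn, hcast]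
  exact ⟨le_stripedGuess (Nat.two_pow_pos k) hq hnn hsum, stripedGuess_le _ hnn hsum⟩

theorem stmt_7 (N : ℕ) (hN : 1 ≤ N) (q : Fin N → ℝ)
    (hnn : ∀ i, 0 ≤ q i) (hsum : ∑ i, q i = 1)
    (hsort : ∀ i j : Fin N, i ≤ j → q j ≤ q i) (k : ℕ) :
    ((2 : ℝ) ^ k)⁻¹ * (guess N q - 1 / 2) + 1 / 2 ≤ guessOptK N k q ∧
    guessOptK N k q ≤ ((2 : ℝ) ^ k)⁻¹ * (guess N q - 1) + 1 :=
  stmt_7_general N q hnn hsum hsort k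
end

section
/- For every sorted probability distribution p_1 ≥ ⋯ ≥ p_N ≥ 0 and every lying probability 0 ≤ p ≤ 1/2: G_opt(X) = G(X) − MAXCUT(G_X). -/
/-!
The guessing time is a linear function of the pairwise minima: in the optimal (decreasing) order
the pair of positions `(k, m)` contributes the weight at position `max k m`, which is
`min (v i) (v j)` for the items `i, j` placed there, and there are `2k + 1` such ordered pairs with
maximum `k`. Hence `2 G(v) = ∑ v + ∑_{i,j} min (v i) (v j)`. After the query `A` the two
answer-weighted distributions `q i * r_A(i, y)` have pairwise minima summing to `min (q i) (q j)`
when `i, j` lie on the same side of `A`, and to `min (q i) (q j) - w_{i,j}` when `A` separates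
them. Summing over pairs gives `G_A = G - CUT_A`, and minimising over `A` gives the theorem.
-/

open Finset

section Rearrangement

variable {N : ℕ}

theorem sum_sum_apply_max (w : Fin N → ℝ) :
    ∑ k, ∑ m, w (max k m) = ∑ k : Fin N, (2 * (k : ℝ) + 1) * w k := by
  have split : ∀ k m : Fin N,
      w (max k m) = (if m ≤ k then w k else 0) + (if k < m then w m else 0) := by
    intro k m
    rcases le_or_gt m k with h | h
    · simp [h, h.not_gt]
    · simp [h, h.not_ge, h.le]
  simp_rw [split, sum_add_distrib]
  rw [sum_comm (γ := Fin N) (f := fun k m => if k < m then w m else 0)]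
  simp only [sum_ite, filter_ge_eq_Iic, filter_gt_eq_Iio, sum_const, Fin.card_Iic, Fin.card_Iio,
    nsmul_eq_mul, ← sum_add_distrib]
  refine sum_congr rfl fun k _ => ?_
  push_cast
  ring

theorem sum_sum_min_comp_perm (v : Fin N → ℝ) (σ : Equiv.Perm (Fin N)) :
    ∑ k, ∑ m, min (v (σ k)) (v (σ m)) = ∑ i, ∑ j, min (v i) (v j) :=
  (sum_congr rfl fun k _ => Equiv.sum_comp σ fun j => min (v (σ k)) (v j)).trans
    (Equiv.sum_comp σ fun i => ∑ j, min (v i) (v j))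

theorem sum_sum_min_le_sum_mul_comp_perm (v : Fin N → ℝ) (σ : Equiv.Perm (Fin N)) :
    ∑ i, ∑ j, min (v i) (v j) ≤ ∑ k : Fin N, (2 * (k : ℝ) + 1) * v (σ k) := by
  rw [← sum_sum_min_comp_perm v σ, ← sum_sum_apply_max fun k => v (σ k)]
  gcongr with k _ m _
  rcases max_choice k m with h | h <;> simp [h]

theorem sum_sum_min_eq_sum_mul_comp_perm (v : Fin N → ℝ) (σ : Equiv.Perm (Fin N))
    (hσ : Antitone fun k => v (σ k)) :
    ∑ i, ∑ j, min (v i) (v j) = ∑ k : Fin N, (2 * (k : ℝ) + 1) * v (σ k) := by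
  rw [← sum_sum_min_comp_perm v σ, ← sum_sum_apply_max fun k => v (σ k)]
  simp only [hσ.map_max]

theorem guess_eq (v : Fin N → ℝ) :
    guess N v = (∑ i, v i + ∑ i, ∑ j, min (v i) (v j)) / 2 := by
  have hcost : ∀ σ : Equiv.Perm (Fin N), 2 * ∑ k : Fin N, ((k : ℝ) + 1) * v (σ k)
      = ∑ i, v i + ∑ k : Fin N, (2 * (k : ℝ) + 1) * v (σ k) := by
    intro σ
    rw [← Equiv.sum_comp σ v, mul_sum, ← sum_add_distrib]
    exact sum_congr rfl fun k _ => by ring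
  apply le_antisymm
  · let σ := Tuple.sort (OrderDual.toDual ∘ v)
    have hσ : Antitone fun k => v (σ k) := fun _ _ h => Tuple.monotone_sort (OrderDual.toDual ∘ v) h
    have hle : guess N v ≤ ∑ k : Fin N, ((k : ℝ) + 1) * v (σ k) := inf'_le _ (mem_univ σ)
    linarith [hcost σ, sum_sum_min_eq_sum_mul_comp_perm v σ hσ]
  · refine le_inf' _ _ fun σ _ => ?_
    linarith [hcost σ, sum_sum_min_le_sum_mul_comp_perm v σ]

end Rearrangement

theorem min_mul_one_sub_add_min_mul {a b p : ℝ} (ha : 0 ≤ a) (hb : 0 ≤ b) (hp : p ≤ 1 / 2) :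
    min (a * (1 - p)) (b * p) + min (a * p) (b * (1 - p))
      = min a b - max 0 ((1 - p) * min a b - p * max a b) := by
  rcases le_total b a with h | h
  · rw [min_eq_right h, max_eq_left h, min_eq_right (by nlinarith : b * p ≤ a * (1 - p))]
    rcases le_total (a * p) (b * (1 - p)) with h' | h'
    · rw [min_eq_left h', max_eq_right (by nlinarith)]; ring
    · rw [min_eq_right h', max_eq_left (by nlinarith)]; ring
  · rw [min_eq_left h, max_eq_right h, min_eq_left (by nlinarith : a * p ≤ b * (1 - p))]
    rcases le_total (a * (1 - p)) (b * p) with h' | h'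
    · rw [min_eq_left h', max_eq_left (by nlinarith)]; ring
    · rw [min_eq_right h', max_eq_right (by nlinarith)]; ring

theorem sum_sum_ite_iff_mem_eq_two_mul {ι R : Type*} [Fintype ι] [DecidableEq ι] [NonAssocSemiring R]
    (A : Finset ι) (f : ι → ι → R) (hf : ∀ i j, f i j = f j i) :
    ∑ i, ∑ j, (if (i ∈ A ↔ j ∈ A) then 0 else f i j) = 2 * ∑ i ∈ A, ∑ j ∈ Aᶜ, f i j := by
  rw [← sum_add_sum_compl A, two_mul]
  congr 1
  · exact sum_congr rfl fun i hi => by simp [hi, sum_ite, ← compl_filter]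
  · calc ∑ i ∈ Aᶜ, ∑ j, (if (i ∈ A ↔ j ∈ A) then 0 else f i j) = ∑ i ∈ Aᶜ, ∑ j ∈ A, f i j :=
          sum_congr rfl fun i hi => by simp [mem_compl.1 hi]
      _ = ∑ i ∈ A, ∑ j ∈ Aᶜ, f i j := by
          rw [sum_comm]
          exact sum_congr rfl fun j _ => sum_congr rfl fun i _ => hf i j

section Query

variable {N : ℕ}

theorem wt_comm (q : Fin N → ℝ) (p : ℝ) (i j : Fin N) : wt N q p i j = wt N q p j i := by
  rw [wt, wt, min_comm (q i), max_comm (q i)]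

/-- The paper's `r_A(i, y)`. -/
def answerProb (p : ℝ) (A : Finset (Fin N)) (y : Bool) (i : Fin N) : ℝ :=
  if (i ∈ A ↔ y = true) then 1 - p else p

theorem sum_answerProb (p : ℝ) (A : Finset (Fin N)) (i : Fin N) : ∑ y, answerProb p A y i = 1 := by
  by_cases hi : i ∈ A <;> simp [answerProb, hi]

theorem guessA_eq_sum_guess (q : Fin N → ℝ) (p : ℝ) (A : Finset (Fin N)) :
    guessA N q p A = ∑ y, guess N fun i => q i * answerProb p A y i := by
  simp only [guessA, guess, answerProb, mul_assoc]

theorem sum_min_mul_answerProb {q : Fin N → ℝ} {p : ℝ} {i j : Fin N} (hi : 0 ≤ q i) (hj : 0 ≤ q j)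
    (hp0 : 0 ≤ p) (hp : p ≤ 1 / 2) (A : Finset (Fin N)) :
    ∑ y, min (q i * answerProb p A y i) (q j * answerProb p A y j)
      = min (q i) (q j) - if (i ∈ A ↔ j ∈ A) then 0 else wt N q p i j := by
  have hp1 : 0 ≤ 1 - p := by linarith
  by_cases hiA : i ∈ A <;> by_cases hjA : j ∈ A <;>
    simp only [answerProb, Fintype.sum_bool, hiA, hjA, wt, iff_true, iff_false, true_iff, false_iff,
      Bool.false_eq_true, not_true, not_false_iff, if_true, if_false]
  · rw [← min_mul_of_nonneg _ _ hp1, ← min_mul_of_nonneg _ _ hp0]; ring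
  · exact min_mul_one_sub_add_min_mul hi hj hp
  · rw [add_comm]; exact min_mul_one_sub_add_min_mul hi hj hp
  · rw [← min_mul_of_nonneg _ _ hp1, ← min_mul_of_nonneg _ _ hp0]; ring

theorem guessA_eq_guess_sub_cut {q : Fin N → ℝ} (hq : ∀ i, 0 ≤ q i) {p : ℝ} (hp0 : 0 ≤ p)
    (hp : p ≤ 1 / 2) (A : Finset (Fin N)) :
    guessA N q p A = guess N q - cut N q p A := by
  have mass : ∑ y, ∑ i, q i * answerProb p A y i = ∑ i, q i := by
    rw [sum_comm]
    simp only [← mul_sum, sum_answerProb, mul_one]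
  have pairs : ∑ y, ∑ i, ∑ j, min (q i * answerProb p A y i) (q j * answerProb p A y j)
      = ∑ i, ∑ j, min (q i) (q j) - 2 * cut N q p A := by
    rw [cut, ← sum_sum_ite_iff_mem_eq_two_mul A _ (wt_comm q p), ← sum_sub_distrib, sum_comm]
    refine sum_congr rfl fun i _ => ?_
    rw [sum_comm, ← sum_sub_distrib]
    exact sum_congr rfl fun j _ => sum_min_mul_answerProb (hq i) (hq j) hp0 hp A
  simp only [guessA_eq_sum_guess, guess_eq, ← sum_div, sum_add_distrib, mass, pairs]
  ring

end Query

theorem stmt_9_general (N : ℕ) (q : Fin N → ℝ)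
    (hnn : ∀ i, 0 ≤ q i)
    (p : ℝ) (hp0 : 0 ≤ p) (hp : p ≤ 1 / 2) :
    guessOpt N q p = guess N q - maxcut N q p := by
  calc guessOpt N q p = univ.inf' univ_nonempty fun A => guess N q - cut N q p A :=
        inf'_congr _ rfl fun A _ => guessA_eq_guess_sub_cut hnn hp0 hp A
    _ = guess N q - maxcut N q p := (map_finset_sup' (OrderIso.subLeft _) _ _).symm

theorem stmt_9 (N : ℕ) (hN : 1 ≤ N) (q : Fin N → ℝ)
    (hnn : ∀ i, 0 ≤ q i) (hsum : ∑ i, q i = 1)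
    (hsort : ∀ i j : Fin N, i ≤ j → q j ≤ q i)
    (p : ℝ) (hp0 : 0 ≤ p) (hp : p ≤ 1 / 2) :
    guessOpt N q p = guess N q - maxcut N q p :=
  stmt_9_general N q hnn p hp0 hp
end
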